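/- Let A₀ and A₁ be n×n real symmetric matrices, let λ : ℕ → ℝ and x : ℕ → ℝⁿ satisfy: x^(0) is a unit vector with A₀ x^(0) = λ^(0) x^(0); the intermediate normalization ⟨x^(0), x^(k)⟩ = 0 for all k ≥ 1; and the Rayleigh–Schrödinger recurrence (A₀ − λ^(0) I) x^(k) = −(A₁ − λ^(1) I) x^(k−1) + Σ_{j=0}^{k−2} λ^(k−j) x^(j) for all k ≥ 1. Then for every j ≥ 0 the odd-order eigenvalue correction satisfies λ^(2j+1) = ⟨x^(j), A₁ x^(j)⟩ − Σ_{μ=0}^{j} Σ_{ν=1}^{j} λ^(2j+1−μ−ν) ⟨x^(ν), x^(μ)⟩. -/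
import Mathlib


open Matrix BigOperators

private def eps (j k : ℕ) : ℝ := if k ≤ j then -1 else 1

private lemma eps_le {j k : ℕ} (h : k ≤ j) : eps j k = -1 := if_pos h
private lemma eps_gt {j k : ℕ} (h : ¬ k ≤ j) : eps j k = 1 := if_neg h

private lemma key (l : ℕ → ℝ) (a T S : ℕ → ℕ → ℝ)
    (asymm : ∀ i k, a i k = a k i)
    (Tsymm : ∀ i k, T i k = T k i)
    (Ssymm : ∀ i k, S i k = S k i)
    (hS0 : ∀ i, S i 0 = 0)
    (hSrec : ∀ i k, S i (k+1) = -(T i k) + l 1 * a i k +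
        ∑ m ∈ Finset.range k, l (k+1-m) * a i m)
    (a00 : a 0 0 = 1)
    (a0 : ∀ k, 1 ≤ k → a 0 k = 0) (j : ℕ) :
    l (2*j+1) = T j j - ∑ μ ∈ Finset.range (j+1), ∑ ν ∈ Finset.Icc 1 j,
      l (2*j+1-μ-ν) * a ν μ := by
  classical
  -- Step 1: the antisymmetrized sum of S-terms vanishes
  have hzero : ∑ k ∈ Finset.range (2*j+2), eps j k * S (2*j+1-k) k = 0 := by
    apply Finset.sum_involution (fun k _ => 2*j+1-k)
    · intro k hk
      simp only [Finset.mem_range] at hk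
      have e2 : 2*j+1-(2*j+1-k) = k := by omega
      rw [e2, Ssymm (2*j+1-k) k]
      by_cases h : k ≤ j
      · rw [eps_le h, eps_gt (show ¬ (2*j+1-k ≤ j) by omega)]; ring
      · rw [eps_gt h, eps_le (show 2*j+1-k ≤ j by omega)]; ring
    · intro k hk _
      simp only [Finset.mem_range] at hk
      omega
    · intro k hk
      simp only [Finset.mem_range] at hk ⊢
      omega
    · intro k hk
      simp only [Finset.mem_range] at hk
      omega
  -- Step 2: peel off the k = 0 term and substitute the recurrence
  have hsplit := Finset.sum_range_succ' (fun k => eps j k * S (2*j+1-k) k) (2*j+1)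
  rw [hzero] at hsplit
  simp only [Nat.sub_zero] at hsplit
  rw [hS0 (2*j+1), mul_zero, add_zero] at hsplit
  -- hsplit : 0 = ∑ u in range (2j+1), eps j (u+1) * S (2j+1-(u+1)) (u+1)
  have hzero2 : ∑ u ∈ Finset.range (2*j+1),
      (eps j (u+1) * ∑ m ∈ Finset.range u, l (u+1-m) * a (2*j-u) m
        - eps j (u+1) * (T (2*j-u) u - l 1 * a (2*j-u) u)) = 0 := by
    have hcongr : ∑ u ∈ Finset.range (2*j+1),
        (eps j (u+1) * ∑ m ∈ Finset.range u, l (u+1-m) * a (2*j-u) m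
          - eps j (u+1) * (T (2*j-u) u - l 1 * a (2*j-u) u))
        = ∑ k ∈ Finset.range (2*j+1), eps j (k+1) * S (2*j+1-(k+1)) (k+1) := by
      apply Finset.sum_congr rfl
      intro u hu
      have e1 : 2*j+1-(u+1) = 2*j-u := by omega
      rw [e1, hSrec (2*j-u) u]
      ring
    rw [hcongr]
    exact hsplit.symm
  rw [Finset.sum_sub_distrib] at hzero2
  set F : ℝ := ∑ u ∈ Finset.range (2*j+1), eps j (u+1) * (T (2*j-u) u - l 1 * a (2*j-u) u)
    with hFdef
  set G : ℝ := ∑ u ∈ Finset.range (2*j+1),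
      eps j (u+1) * ∑ m ∈ Finset.range u, l (u+1-m) * a (2*j-u) m with hGdef
  have hFG : F = G := by linarith
  -- Step 4: F = T j j - l 1 * a j j
  have hFrefl : F = ∑ u ∈ Finset.range (2*j+1),
      eps j (2*j+1-u) * (T (2*j-u) u - l 1 * a (2*j-u) u) := by
    rw [hFdef]
    apply Finset.sum_nbij' (fun u => 2*j-u) (fun u => 2*j-u)
    · intro u hu; simp only [Finset.mem_range] at hu ⊢; omega
    · intro u hu; simp only [Finset.mem_range] at hu ⊢; omega
    · intro u hu; simp only [Finset.mem_range] at hu; omega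
    · intro u hu; simp only [Finset.mem_range] at hu; omega
    · intro u hu
      simp only [Finset.mem_range] at hu
      have e1 : 2*j+1-(2*j-u) = u+1 := by omega
      have e2 : 2*j-(2*j-u) = u := by omega
      rw [e1, e2, Tsymm, asymm]
  have hFval : F = T j j - l 1 * a j j := by
    have h2F : F + F = ∑ u ∈ Finset.range (2*j+1),
        ((eps j (u+1) + eps j (2*j+1-u)) * (T (2*j-u) u - l 1 * a (2*j-u) u)) := by
      nth_rewrite 2 [hFrefl]
      rw [hFdef, ← Finset.sum_add_distrib]
      apply Finset.sum_congr rfl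
      intro u _; ring
    have hsingle : ∑ u ∈ Finset.range (2*j+1),
        ((eps j (u+1) + eps j (2*j+1-u)) * (T (2*j-u) u - l 1 * a (2*j-u) u))
        = 2 * (T j j - l 1 * a j j) := by
      rw [Finset.sum_eq_single j]
      · have e1 : 2*j-j = j := by omega
        have e2 : 2*j+1-j = j+1 := by omega
        rw [e1, e2, eps_gt (show ¬ (j+1 ≤ j) by omega)]
        ring
      · intro u hu hne
        simp only [Finset.mem_range] at hu
        rcases lt_or_gt_of_ne hne with h | h
        · rw [eps_le (show u+1 ≤ j by omega), eps_gt (show ¬ (2*j+1-u ≤ j) by omega)]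
          ring
        · rw [eps_gt (show ¬ (u+1 ≤ j) by omega), eps_le (show 2*j+1-u ≤ j by omega)]
          ring
      · intro h
        exact absurd (Finset.mem_range.mpr (by omega)) h
    rw [hsingle] at h2F
    linarith
  -- Step 5: analyze G
  have hGrefl : G = ∑ v ∈ Finset.range (2*j+1),
      eps j (2*j+1-v) * ∑ m ∈ Finset.range (2*j-v), l (2*j+1-v-m) * a v m := by
    rw [hGdef]
    apply Finset.sum_nbij' (fun u => 2*j-u) (fun u => 2*j-u)
    · intro u hu; simp only [Finset.mem_range] at hu ⊢; omega
    · intro u hu; simp only [Finset.mem_range] at hu ⊢; omega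
    · intro u hu; simp only [Finset.mem_range] at hu; omega
    · intro u hu; simp only [Finset.mem_range] at hu; omega
    · intro u hu
      simp only [Finset.mem_range] at hu
      have e1 : 2*j+1-(2*j-u) = u+1 := by omega
      have e2 : 2*j-(2*j-u) = u := by omega
      rw [e1, e2]
  -- guarded double-sum form
  have hGP : G = ∑ v ∈ Finset.range (2*j+1), ∑ m ∈ Finset.range (2*j+1),
      (if v + m < 2*j then eps j (2*j+1-v) * (l (2*j+1-v-m) * a v m) else 0) := by
    rw [hGrefl]
    apply Finset.sum_congr rfl
    intro v hv
    simp only [Finset.mem_range] at hv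
    rw [Finset.mul_sum]
    rw [show (Finset.range (2*j-v)) = Finset.range (2*j+1) ∩ Finset.range (2*j-v) from
      (Finset.inter_eq_right.mpr (Finset.range_subset_range.mpr (by omega))).symm]
    rw [← Finset.sum_ite_mem]
    apply Finset.sum_congr rfl
    intro m _
    simp only [Finset.mem_range]
    by_cases h : v + m < 2*j
    · rw [if_pos h, if_pos (by omega)]
    · rw [if_neg h, if_neg (by omega)]
  have hGQ : G = ∑ v ∈ Finset.range (2*j+1), ∑ m ∈ Finset.range (2*j+1),
      (if v ≤ j ∧ m ≤ j ∧ ¬(v = j ∧ m = j) then l (2*j+1-v-m) * a v m else 0) := by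
    have hswap : G = ∑ v ∈ Finset.range (2*j+1), ∑ m ∈ Finset.range (2*j+1),
        (if v + m < 2*j then eps j (2*j+1-m) * (l (2*j+1-v-m) * a v m) else 0) := by
      rw [hGP, Finset.sum_comm]
      apply Finset.sum_congr rfl
      intro v _
      apply Finset.sum_congr rfl
      intro m _
      by_cases h : v + m < 2*j
      · rw [if_pos (by omega : m + v < 2*j), if_pos h]
        have e1 : 2*j+1-m-v = 2*j+1-v-m := by omega
        rw [e1, asymm m v]
      · rw [if_neg (by omega : ¬ (m + v < 2*j)), if_neg h]
    have h2G : G + G = ∑ v ∈ Finset.range (2*j+1), ∑ m ∈ Finset.range (2*j+1),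
        (2 * if v ≤ j ∧ m ≤ j ∧ ¬(v = j ∧ m = j) then l (2*j+1-v-m) * a v m else 0) := by
      nth_rewrite 1 [hGP]
      nth_rewrite 1 [hswap]
      rw [← Finset.sum_add_distrib]
      apply Finset.sum_congr rfl
      intro v hv
      rw [← Finset.sum_add_distrib]
      apply Finset.sum_congr rfl
      intro m hm
      simp only [Finset.mem_range] at hv hm
      by_cases h : v + m < 2*j
      · rw [if_pos h, if_pos h]
        by_cases h1 : v ≤ j
        · by_cases h2 : m ≤ j
          · rw [if_pos ⟨h1, h2, by omega⟩,
              eps_gt (show ¬ (2*j+1-v ≤ j) by omega),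
              eps_gt (show ¬ (2*j+1-m ≤ j) by omega)]
            ring
          · rw [if_neg (by tauto),
              eps_gt (show ¬ (2*j+1-v ≤ j) by omega),
              eps_le (show 2*j+1-m ≤ j by omega)]
            ring
        · have h2 : m ≤ j := by omega
          rw [if_neg (by tauto),
            eps_le (show 2*j+1-v ≤ j by omega),
            eps_gt (show ¬ (2*j+1-m ≤ j) by omega)]
          ring
      · rw [if_neg h, if_neg h, if_neg (by omega)]
        ring
    have hmul : ∑ v ∈ Finset.range (2*j+1), ∑ m ∈ Finset.range (2*j+1),
        (2 * if v ≤ j ∧ m ≤ j ∧ ¬(v = j ∧ m = j) then l (2*j+1-v-m) * a v m else 0)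
        = 2 * ∑ v ∈ Finset.range (2*j+1), ∑ m ∈ Finset.range (2*j+1),
        (if v ≤ j ∧ m ≤ j ∧ ¬(v = j ∧ m = j) then l (2*j+1-v-m) * a v m else 0) := by
      rw [Finset.mul_sum]
      exact Finset.sum_congr rfl (fun v _ => (Finset.mul_sum _ _ _).symm)
    rw [hmul] at h2G
    linarith
  -- shrink ranges to j+1
  have hGsmall : G = ∑ v ∈ Finset.range (j+1), ∑ m ∈ Finset.range (j+1),
      (if ¬(v = j ∧ m = j) then l (2*j+1-v-m) * a v m else 0) := by
    rw [hGQ]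
    rw [← Finset.sum_subset (Finset.range_subset_range.mpr (show j+1 ≤ 2*j+1 by omega))]
    · apply Finset.sum_congr rfl
      intro v hv
      simp only [Finset.mem_range] at hv
      rw [← Finset.sum_subset (Finset.range_subset_range.mpr (show j+1 ≤ 2*j+1 by omega))]
      · apply Finset.sum_congr rfl
        intro m hm
        simp only [Finset.mem_range] at hm
        by_cases h : ¬(v = j ∧ m = j)
        · rw [if_pos h, if_pos ⟨by omega, by omega, h⟩]
        · rw [if_neg h, if_neg (by tauto)]
      · intro m _ hm
        simp only [Finset.mem_range, not_lt] at hm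
        rw [if_neg (by omega)]
    · intro v _ hv
      simp only [Finset.mem_range, not_lt] at hv
      apply Finset.sum_eq_zero
      intro m _
      rw [if_neg (by omega)]
  -- final algebra
  have hfinal : G + l 1 * a j j = l (2*j+1) +
      ∑ μ ∈ Finset.range (j+1), ∑ ν ∈ Finset.Icc 1 j, l (2*j+1-μ-ν) * a ν μ := by
    have hdiag : ∑ v ∈ Finset.range (j+1), ∑ m ∈ Finset.range (j+1),
        (if v = j ∧ m = j then l 1 * a j j else 0) = l 1 * a j j := by
      rw [Finset.sum_eq_single j]
      · rw [Finset.sum_eq_single j]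
        · rw [if_pos ⟨rfl, rfl⟩]
        · intro m _ hm; rw [if_neg (by tauto)]
        · intro h; exact absurd (Finset.mem_range.mpr (by omega)) h
      · intro v _ hv
        apply Finset.sum_eq_zero
        intro m _; rw [if_neg (by tauto)]
      · intro h; exact absurd (Finset.mem_range.mpr (by omega)) h
    have hfull : G + l 1 * a j j = ∑ v ∈ Finset.range (j+1), ∑ m ∈ Finset.range (j+1),
        l (2*j+1-v-m) * a v m := by
      rw [hGsmall, ← hdiag, ← Finset.sum_add_distrib]
      apply Finset.sum_congr rfl
      intro v hv
      rw [← Finset.sum_add_distrib]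
      apply Finset.sum_congr rfl
      intro m hm
      simp only [Finset.mem_range] at hv hm
      by_cases h : v = j ∧ m = j
      · rw [if_neg (by tauto), if_pos h, h.1, h.2]
        have e1 : 2*j+1-j-j = 1 := by omega
        rw [e1]; ring
      · rw [if_pos h, if_neg h, add_zero]
    rw [hfull]
    have hins : Finset.range (j+1) = insert 0 (Finset.Icc 1 j) := by
      ext k; simp only [Finset.mem_range, Finset.mem_insert, Finset.mem_Icc]; omega
    nth_rewrite 1 [hins]
    rw [Finset.sum_insert (by simp)]
    have hzero_row : ∑ m ∈ Finset.range (j+1), l (2*j+1-0-m) * a 0 m = l (2*j+1) := by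
      rw [Finset.sum_eq_single 0]
      · rw [a00]; norm_num
      · intro m _ hm
        rw [a0 m (by omega), mul_zero]
      · intro h; exact absurd (Finset.mem_range.mpr (by omega)) h
    rw [hzero_row]
    congr 1
    rw [Finset.sum_comm]
    apply Finset.sum_congr rfl
    intro μ _
    apply Finset.sum_congr rfl
    intro ν _
    have e1 : 2*j+1-ν-μ = 2*j+1-μ-ν := by omega
    rw [e1]
  linarith [hFG, hFval, hfinal]

private lemma dot_sum {n : ℕ} (v : Fin n → ℝ) (s : Finset ℕ) (f : ℕ → Fin n → ℝ) :
    v ⬝ᵥ (∑ i ∈ s, f i) = ∑ i ∈ s, v ⬝ᵥ f i := by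
  simp only [dotProduct, Finset.sum_apply, Finset.mul_sum]
  exact Finset.sum_comm

private lemma dot_symm {n : ℕ} {M : Matrix (Fin n) (Fin n) ℝ} (hM : M.IsSymm)
    (v w : Fin n → ℝ) : v ⬝ᵥ M.mulVec w = w ⬝ᵥ M.mulVec v := by
  rw [Matrix.dotProduct_mulVec, ← Matrix.mulVec_transpose, hM.eq, dotProduct_comm]


/-- Odd-order eigenvalue correction formula in Rayleigh–Schrödinger perturbation theory:
`λ⁽²ʲ⁺¹⁾ = ⟨x⁽ʲ⁾, A₁ x⁽ʲ⁾⟩ − ∑_{μ=0}^{j} ∑_{ν=1}^{j} λ⁽²ʲ⁺¹⁻μ⁻ν⁾ ⟨x⁽ᵛ⁾, x⁽μ⁾⟩`. -/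
theorem odd_order_eigenvalue_correction
    {n : ℕ}
    (A₀ A₁ : Matrix (Fin n) (Fin n) ℝ)
    (hA₀ : A₀.IsSymm) (hA₁ : A₁.IsSymm)
    (l : ℕ → ℝ) (x : ℕ → Fin n → ℝ)
    (hunit : x 0 ⬝ᵥ x 0 = 1)
    (heig : A₀.mulVec (x 0) = l 0 • x 0)
    (hnorm : ∀ k : ℕ, 1 ≤ k → x 0 ⬝ᵥ x k = 0)
    (hrec : ∀ k : ℕ, 1 ≤ k →
      (A₀ - l 0 • (1 : Matrix (Fin n) (Fin n) ℝ)).mulVec (x k) =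
        -((A₁ - l 1 • (1 : Matrix (Fin n) (Fin n) ℝ)).mulVec (x (k - 1))) +
          ∑ j ∈ Finset.range (k - 1), l (k - j) • x j) :
    ∀ j : ℕ,
      l (2 * j + 1) = x j ⬝ᵥ A₁.mulVec (x j) -
        ∑ μ ∈ Finset.range (j + 1), ∑ ν ∈ Finset.Icc 1 j,
          l (2 * j + 1 - μ - ν) * (x ν ⬝ᵥ x μ) := by
  intro j
  have hB : (A₀ - l 0 • (1 : Matrix (Fin n) (Fin n) ℝ)).IsSymm := by
    simp [Matrix.IsSymm, Matrix.transpose_sub, Matrix.transpose_smul,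
      Matrix.transpose_one, hA₀.eq]
  have hB0 : (A₀ - l 0 • (1 : Matrix (Fin n) (Fin n) ℝ)).mulVec (x 0) = 0 := by
    rw [Matrix.sub_mulVec, Matrix.smul_mulVec, Matrix.one_mulVec, heig, sub_self]
  exact key l (fun i k => x i ⬝ᵥ x k) (fun i k => x i ⬝ᵥ A₁.mulVec (x k))
    (fun i k => x i ⬝ᵥ (A₀ - l 0 • (1 : Matrix (Fin n) (Fin n) ℝ)).mulVec (x k))
    (fun i k => dotProduct_comm _ _)
    (fun i k => dot_symm hA₁ _ _)
    (fun i k => dot_symm hB _ _)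
    (fun i => by simp only [hB0, dotProduct_zero])
    (fun i k => by
      have h := hrec (k+1) (by omega)
      simp only [Nat.add_sub_cancel] at h
      show x i ⬝ᵥ (A₀ - l 0 • (1 : Matrix (Fin n) (Fin n) ℝ)).mulVec (x (k+1)) =
        -(x i ⬝ᵥ A₁.mulVec (x k)) + l 1 * (x i ⬝ᵥ x k) +
          ∑ m ∈ Finset.range k, l (k+1-m) * (x i ⬝ᵥ x m)
      rw [h, dotProduct_add, dotProduct_neg, Matrix.sub_mulVec,
        Matrix.smul_mulVec, Matrix.one_mulVec, dotProduct_sub,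
        dotProduct_smul, smul_eq_mul, dot_sum]
      simp only [dotProduct_smul, smul_eq_mul]
      ring)
    hunit hnorm j
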